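/- Let T be a consistent c.e. extension of PA and let A(p1,...,pn,q1,...,qm) be a propositional formula such that for every f : {1,...,m} → {0,1}, A(p⃗, ⊤^{f(1)},...,⊤^{f(m)}) is contingent. Then for any arithmetic sentences ψ1,...,ψm and any Σ1 sentence σ, there exist arithmetic sentences φ1,...,φn such that PA + Con_T proves σ ↔ Pr_T(⌜A(φ1,...,φn,ψ1,...,ψm)⌝). -/

import Mathlib

/-- An abstract setting for the arithmetic of provability: a type of sentences
of the language of arithmetic with falsity and implication, a provability
predicate `pr` (the sentence `Pr_T(⌜·⌝)`), provability in PA and in the fixed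
consistent c.e. extension `T` of PA, the class of Σ₁ sentences, and truth in
the standard model ℕ. -/
structure PASetup where
  Sent : Type
  fal : Sent
  imp : Sent → Sent → Sent
  pr : Sent → Sent
  PAPrv : Sent → Prop
  TPrv : Sent → Prop
  Sigma1 : Sent → Prop
  TrueN : Sent → Prop

namespace PASetup

def neg (S : PASetup) (A : S.Sent) : S.Sent := S.imp A S.fal
def conj (S : PASetup) (A B : S.Sent) : S.Sent := S.neg (S.imp A (S.neg B))
def disj (S : PASetup) (A B : S.Sent) : S.Sent := S.imp (S.neg A) B
def biimp (S : PASetup) (A B : S.Sent) : S.Sent := S.conj (S.imp A B) (S.imp B A)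
/-- `Con_T := ¬Pr_T(⌜0=1⌝)`. -/
def con (S : PASetup) : S.Sent := S.neg (S.pr S.fal)
/-- Provability in `PA + Con_T` (via the deduction theorem). -/
def PAConPrv (S : PASetup) (A : S.Sent) : Prop := S.PAPrv (S.imp S.con A)

/-- Iterated consistency statements: `Con_T^0 := (0=0)`,
`Con_T^{n+1} := ¬Pr_T(⌜¬Con_T^n⌝)`. -/
def conIter (S : PASetup) : ℕ → S.Sent
  | 0 => S.neg S.fal
  | n+1 => S.neg (S.pr (S.neg (conIter S n)))

/-- `A` is an instance of a propositional tautology. -/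
def TautInst (S : PASetup) (A : S.Sent) : Prop :=
  ∀ v : S.Sent → Bool, (∀ B C, v (S.imp B C) = (!(v B) || v C)) →
    v S.fal = false → v A = true

/-- The standard facts assumed about `PA`, `T`, and the natural Σ₁ provability
predicate `Pr_T` (closure under propositional logic, consistency of `T`, the
Hilbert–Bernays–Löb derivability conditions, provable Σ₁-completeness, Löb's
theorem, soundness of PA, and the semantics of truth in ℕ). -/
structure Facts (S : PASetup) : Prop where
  pa_taut : ∀ A, S.TautInst A → S.PAPrv A
  pa_mp : ∀ A B, S.PAPrv (S.imp A B) → S.PAPrv A → S.PAPrv B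
  pa_t : ∀ A, S.PAPrv A → S.TPrv A
  t_taut : ∀ A, S.TautInst A → S.TPrv A
  t_mp : ∀ A B, S.TPrv (S.imp A B) → S.TPrv A → S.TPrv B
  t_con : ¬ S.TPrv S.fal
  d1 : ∀ A, S.TPrv A → S.PAPrv (S.pr A)
  d2 : ∀ A B, S.PAPrv (S.imp (S.pr (S.imp A B)) (S.imp (S.pr A) (S.pr B)))
  d3 : ∀ A, S.Sigma1 A → S.PAPrv (S.imp A (S.pr A))
  sigma1_pr : ∀ A, S.Sigma1 (S.pr A)
  sigma1_fal : S.Sigma1 S.fal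
  sigma1_top : S.Sigma1 (S.neg S.fal)
  prv_of_incon : ∀ A, S.PAPrv (S.imp (S.neg S.con) (S.pr A))
  lob : ∀ A, S.TPrv (S.imp (S.pr A) A) → S.TPrv A
  pa_sound : ∀ A, S.PAPrv A → S.TrueN A
  true_imp : ∀ A B, S.TrueN (S.imp A B) ↔ (S.TrueN A → S.TrueN B)
  true_fal : ¬ S.TrueN S.fal
  true_pr : ∀ A, S.TrueN (S.pr A) ↔ S.TPrv A

end PASetup

/-- Classical propositional formulas over variable type `α`. -/
inductive PropForm (α : Type) : Type
  | var : α → PropForm α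
  | fal : PropForm α
  | imp : PropForm α → PropForm α → PropForm α

namespace PropForm

variable {α β : Type}

def neg (A : PropForm α) : PropForm α := imp A fal
def top : PropForm α := neg fal
def conj (A B : PropForm α) : PropForm α := neg (imp A (neg B))
def disj (A B : PropForm α) : PropForm α := imp (neg A) B
def biimp (A B : PropForm α) : PropForm α := conj (imp A B) (imp B A)
/-- `⊤^1 = ⊤`, `⊤^0 = ⊥`. -/
def const (b : Bool) : PropForm α := if b then top else fal

def eval (v : α → Bool) : PropForm α → Bool
  | var a => v a
  | fal => false
  | imp A B => !(eval v A) || eval v B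

/-- Simultaneous substitution. -/
def subst (s : α → PropForm β) : PropForm α → PropForm β
  | var a => s a
  | fal => fal
  | imp A B => imp (subst s A) (subst s B)

def Taut (A : PropForm α) : Prop := ∀ v, eval v A = true
def Unsat (A : PropForm α) : Prop := ∀ v, eval v A = false
def Contingent (A : PropForm α) : Prop := ¬ Taut A ∧ ¬ Unsat A

end PropForm

/-- Substitution of arithmetic sentences for the variables of a propositional
formula. -/
def PASetup.interp (S : PASetup) {α : Type} (g : α → S.Sent) : PropForm α → S.Sent
  | PropForm.var a => g a
  | PropForm.fal => S.fal
  | PropForm.imp A B => S.imp (S.interp g A) (S.interp g B)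

/-! Let `ρ` be the sentence with `PA + Con_T ⊢ σ ↔ Pr_T(⌜ρ⌝)` given by the FGH theorem. By
contingency, for every truth assignment `f` to the `q`'s and every truth value `b` there is an
assignment `t f b` to the `p`'s making `A(t f b, f)` take the value `b`. By functional completeness
the truth functions `(ψ⃗, ρ) ↦ t ψ⃗ ρ i` are expressed by sentences `φᵢ` built propositionally from
`ψ⃗` and `ρ`, and then `ρ ↔ A(φ⃗, ψ⃗)` is a tautology.
Hence `PA ⊢ Pr_T(⌜ρ⌝) ↔ Pr_T(⌜A(φ⃗, ψ⃗)⌝)`, and the claim follows. -/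

namespace PropForm

variable {α β : Type}

theorem eval_subst (s : α → PropForm β) (v : β → Bool) (A : PropForm α) :
    eval v (subst s A) = eval (fun a => eval v (s a)) A := by
  induction A with
  | var a => rfl
  | fal => rfl
  | imp A B ihA ihB => simp only [subst, eval, ihA, ihB]

theorem eval_const (v : α → Bool) (b : Bool) : eval v (const b) = b := by
  cases b <;> rfl

theorem eval_neg (v : α → Bool) (A : PropForm α) : eval v (neg A) = !eval v A := by
  simp [neg, eval]

theorem eval_disj (v : α → Bool) (A B : PropForm α) :
    eval v (disj A B) = (eval v A || eval v B) := by
  simp [disj, neg, eval]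

theorem eval_conj (v : α → Bool) (A B : PropForm α) :
    eval v (conj A B) = (eval v A && eval v B) := by
  simp [conj, neg, eval]

def bigDisj : List (PropForm α) → PropForm α
  | [] => fal
  | A :: l => disj A (bigDisj l)

theorem eval_bigDisj (v : α → Bool) (l : List (PropForm α)) :
    eval v (bigDisj l) = l.any (eval v) := by
  induction l with
  | nil => rfl
  | cons A l ih => simp [bigDisj, eval_disj, ih]

def bigConj : List (PropForm α) → PropForm α
  | [] => top
  | A :: l => conj A (bigConj l)

theorem eval_bigConj (v : α → Bool) (l : List (PropForm α)) :
    eval v (bigConj l) = l.all (eval v) := by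
  induction l with
  | nil => rfl
  | cons A l ih => simp [bigConj, eval_conj, ih]

def literal (a : α) (b : Bool) : PropForm α := if b then var a else neg (var a)

theorem eval_literal (v : α → Bool) (a : α) (b : Bool) :
    eval v (literal a b) = (v a == b) := by
  cases b <;> cases h : v a <;> simp [literal, eval, eval_neg, h]

noncomputable def charForm [Fintype α] (w : α → Bool) : PropForm α :=
  bigConj (Finset.univ.toList.map fun a => literal a (w a))

theorem eval_charForm [Fintype α] (v w : α → Bool) :
    eval v (charForm w) = true ↔ v = w := by
  simp [charForm, eval_bigConj, eval_literal, funext_iff]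

noncomputable def ofFun [Fintype α] [DecidableEq α] (G : (α → Bool) → Bool) : PropForm α :=
  bigDisj ((Finset.univ.toList.filter G).map charForm)

theorem eval_ofFun [Fintype α] [DecidableEq α] (G : (α → Bool) → Bool) (v : α → Bool) :
    eval v (ofFun G) = G v := by
  rw [Bool.eq_iff_iff, ofFun, eval_bigDisj]
  simp [eval_charForm]

section SubstRightConst

variable {s : α ⊕ β → PropForm α} {f : β → Bool}

theorem eval_subst_eq_eval_sum_elim (hs_inl : ∀ i, s (Sum.inl i) = var i)
    (hs_inr : ∀ j, s (Sum.inr j) = const (f j)) (A : PropForm (α ⊕ β)) (v : α → Bool) :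
    eval v (A.subst s) = eval (Sum.elim v f) A := by
  rw [eval_subst]
  congr 1
  funext x
  cases x with
  | inl i => rw [hs_inl]; rfl
  | inr j => rw [hs_inr, eval_const]; rfl

theorem Contingent.exists_eval_sum_elim_eq {A : PropForm (α ⊕ β)} (hA : Contingent (A.subst s))
    (hs_inl : ∀ i, s (Sum.inl i) = var i) (hs_inr : ∀ j, s (Sum.inr j) = const (f j))
    (b : Bool) : ∃ t : α → Bool, eval (Sum.elim t f) A = b := by
  obtain ⟨hnt, hnu⟩ := hA
  simp only [Taut, Unsat, eval_subst_eq_eval_sum_elim hs_inl hs_inr, not_forall] at hnt hnu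
  cases b
  · simpa using hnt
  · simpa using hnu

end SubstRightConst

end PropForm

namespace PASetup

variable {S : PASetup} {γ : Type}

theorem valuation_interp {v : S.Sent → Bool} (himp : ∀ B C, v (S.imp B C) = (!(v B) || v C))
    (hfal : v S.fal = false) (g : γ → S.Sent) (A : PropForm γ) :
    v (S.interp g A) = A.eval (fun a => v (g a)) := by
  induction A with
  | var a => rfl
  | fal => exact hfal
  | imp A B ihA ihB => rw [interp, himp, ihA, ihB]; rfl

theorem valuation_biimp {v : S.Sent → Bool} (himp : ∀ B C, v (S.imp B C) = (!(v B) || v C))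
    (hfal : v S.fal = false) (B C : S.Sent) : v (S.biimp B C) = (v B == v C) := by
  simp only [biimp, conj, neg, himp, hfal]
  cases v B <;> cases v C <;> rfl

theorem exists_tautInst_biimp_interp {α β : Type} [Fintype β] [DecidableEq β]
    (A : PropForm (α ⊕ β))
    (hA : ∀ (f : β → Bool) (b : Bool), ∃ t : α → Bool, A.eval (Sum.elim t f) = b)
    (ψ : β → S.Sent) (ρ : S.Sent) :
    ∃ φ : α → S.Sent, S.TautInst (S.biimp ρ (S.interp (Sum.elim φ ψ) A)) := by
  choose t ht using hA
  let φ : α → S.Sent := fun i => S.interp (Sum.elim ψ fun _ => ρ)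
    (PropForm.ofFun fun w => t (w ∘ Sum.inl) (w (Sum.inr ())) i)
  refine ⟨φ, fun v himp hfal => ?_⟩
  have hvφ : (fun x => v (Sum.elim φ ψ x)) = Sum.elim (t (v ∘ ψ) (v ρ)) (v ∘ ψ) := by
    funext x
    cases x with
    | inl i => simp only [φ, Sum.elim_inl, valuation_interp himp hfal, PropForm.eval_ofFun]; rfl
    | inr j => rfl
  rw [valuation_biimp himp hfal, valuation_interp himp hfal, hvφ, ht]
  exact beq_self_eq_true _

theorem Facts.paPrv_of_tautImp (hS : S.Facts) {A B : S.Sent}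
    (h : ∀ v : S.Sent → Bool, (∀ B C, v (S.imp B C) = (!(v B) || v C)) → v S.fal = false →
      v A = true → v B = true)
    (hA : S.PAPrv A) : S.PAPrv B :=
  hS.pa_mp _ _ (hS.pa_taut _ fun v himp hfal => by
    rw [himp]
    cases hvA : v A
    · rfl
    · rw [h v himp hfal hvA]; rfl) hA

theorem Facts.paPrv_of_tautImp₂ (hS : S.Facts) {A B C : S.Sent}
    (h : ∀ v : S.Sent → Bool, (∀ B C, v (S.imp B C) = (!(v B) || v C)) → v S.fal = false →
      v A = true → v B = true → v C = true)
    (hA : S.PAPrv A) (hB : S.PAPrv B) : S.PAPrv C :=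
  hS.pa_mp _ _ (hS.paPrv_of_tautImp (A := A) (fun v himp hfal hvA => by
    rw [himp]
    cases hvB : v B
    · rfl
    · rw [h v himp hfal hvA hvB]; rfl) hA) hB

theorem Facts.paPrv_pr_imp_pr (hS : S.Facts) {B C : S.Sent} (h : S.PAPrv (S.imp B C)) :
    S.PAPrv (S.imp (S.pr B) (S.pr C)) :=
  hS.pa_mp _ _ (hS.d2 B C) (hS.d1 _ (hS.pa_t _ h))

theorem Facts.paPrv_pr_biimp_pr (hS : S.Facts) {B C : S.Sent} (h : S.PAPrv (S.biimp B C)) :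
    S.PAPrv (S.biimp (S.pr B) (S.pr C)) := by
  have hBC : S.PAPrv (S.imp B C) := hS.paPrv_of_tautImp (fun v himp hfal hv => by
    rw [valuation_biimp himp hfal] at hv; simp [himp, beq_iff_eq.mp hv]) h
  have hCB : S.PAPrv (S.imp C B) := hS.paPrv_of_tautImp (fun v himp hfal hv => by
    rw [valuation_biimp himp hfal] at hv; simp [himp, beq_iff_eq.mp hv]) h
  refine hS.paPrv_of_tautImp₂ (fun v himp hfal h₁ h₂ => ?_)
    (hS.paPrv_pr_imp_pr hBC) (hS.paPrv_pr_imp_pr hCB)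
  revert h₁ h₂
  rw [himp, himp, valuation_biimp himp hfal]
  cases v (S.pr B) <;> cases v (S.pr C) <;> decide

theorem Facts.paConPrv_biimp_trans (hS : S.Facts) {A B C : S.Sent}
    (hAB : S.PAConPrv (S.biimp A B)) (hBC : S.PAPrv (S.biimp B C)) :
    S.PAConPrv (S.biimp A C) := by
  refine hS.paPrv_of_tautImp₂ (fun v himp hfal h₁ h₂ => ?_) hAB hBC
  revert h₁ h₂
  simp only [himp, valuation_biimp himp hfal]
  cases v S.con <;> cases v A <;> cases v B <;> cases v C <;> decide

end PASetup

/-- assuming the FGH theorem: if `A(p⃗,⊤^{f(1)},…,⊤^{f(m)})` is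
contingent for all `f`, then for all sentences `ψ₁,…,ψₘ` and every Σ₁ sentence
`σ` there are sentences `φ₁,…,φₙ` with
`PA + Con_T ⊢ σ ↔ Pr_T(⌜A(φ₁,…,φₙ,ψ₁,…,ψₘ)⌝)`. -/
theorem fgh_prop_form_param (S : PASetup) (hS : S.Facts)
    (fgh : ∀ σ, S.Sigma1 σ → ∃ φ, S.PAConPrv (S.biimp σ (S.pr φ)))
    (n m : ℕ) (A : PropForm (Fin n ⊕ Fin m))
    (hA : ∀ f : Fin m → Bool,
      PropForm.Contingent (A.subst fun x =>
        match x with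
        | Sum.inl i => PropForm.var i
        | Sum.inr j => PropForm.const (f j))) :
    ∀ ψ : Fin m → S.Sent, ∀ σ, S.Sigma1 σ →
      ∃ φ : Fin n → S.Sent,
        S.PAConPrv (S.biimp σ (S.pr (S.interp (Sum.elim φ ψ) A))) := by
  intro ψ σ hσ
  obtain ⟨ρ, hρ⟩ := fgh σ hσ
  obtain ⟨φ, hφ⟩ := S.exists_tautInst_biimp_interp A
    (fun f => (hA f).exists_eval_sum_elim_eq (fun _ => rfl) (fun _ => rfl)) ψ ρ
  exact ⟨φ, hS.paConPrv_biimp_trans hρ (hS.paPrv_pr_biimp_pr (hS.pa_taut _ hφ))⟩
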